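/- Let γ ∈ (0,1) and f : [0,1]² → ℝ be continuous and γ-Hölder (w.r.t. d((s,t),(s',t')) = |s-s'|+|t-t'|) with f vanishing on the diagonal. For ε ∈ (0,1) define the shifted function f_ε(s,t) = f((s-ε)∨0, (t-ε)∨0). Then sup_{0≤s<t≤1} |f_ε(s,t) - f(s,t)|/(t-s)^{γ'} → 0 as ε → 0, for every γ' ∈ (0,γ). -/
import Mathlib


open Real Set

/-- If `f : [0,1]² → ℝ` is continuous, `γ`-Hölder and vanishes on the diagonal, then the
shifted functions `f_ε(s,t) = f((s-ε)∨0, (t-ε)∨0)` converge to `f` in the `γ'`-weighted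
uniform sense `sup_{s<t} |f_ε(s,t) - f(s,t)|/(t-s)^{γ'} → 0` as `ε → 0`, for every
`γ' ∈ (0,γ)`. -/
theorem stmt16 (γ L : ℝ) (hγ0 : 0 < γ) (hγ1 : γ < 1)
    (f : ℝ → ℝ → ℝ)
    (hfc : ContinuousOn (fun q : ℝ × ℝ => f q.1 q.2) (Icc (0:ℝ) 1 ×ˢ Icc (0:ℝ) 1))
    (hH : ∀ s ∈ Icc (0:ℝ) 1, ∀ t ∈ Icc (0:ℝ) 1, ∀ s' ∈ Icc (0:ℝ) 1, ∀ t' ∈ Icc (0:ℝ) 1,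
      |f s t - f s' t'| ≤ L * (|s - s'| + |t - t'|) ^ γ)
    (hdiag : ∀ s ∈ Icc (0:ℝ) 1, f s s = 0) :
    ∀ γ' : ℝ, 0 < γ' → γ' < γ → ∀ δ : ℝ, 0 < δ → ∃ ε₀ : ℝ, 0 < ε₀ ∧
      ∀ ε : ℝ, 0 < ε → ε < ε₀ → ∀ s t : ℝ, 0 ≤ s → s < t → t ≤ 1 →
        |f (max (s - ε) 0) (max (t - ε) 0) - f s t| ≤ δ * (t - s) ^ γ' := by
  intro γ' hγ'0 hγ'γ δ hδ
  -- L is nonnegative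
  have hL : 0 ≤ L := by
    have h := hH 0 (by norm_num) 0 (by norm_num) 1 (by norm_num) 0 (by norm_num)
    simp only [sub_zero, zero_sub, abs_neg, abs_one, abs_zero, add_zero,
      Real.one_rpow, mul_one] at h
    exact le_trans (abs_nonneg _) h
  set C : ℝ := 2 * L + 1 with hC
  have hCpos : 0 < C := by positivity
  have hexp : 0 < γ - γ' := by linarith
  set ε₀ : ℝ := (δ / C) ^ (γ - γ')⁻¹ / 2 with hε₀
  refine ⟨ε₀, by positivity, ?_⟩
  intro ε hε hεlt s t hs hst ht
  -- key smallness : C * (2ε)^(γ-γ') ≤ δ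
  have h2ε : (0:ℝ) < 2 * ε := by linarith
  have hkey : C * (2 * ε) ^ (γ - γ') ≤ δ := by
    have h1 : 2 * ε < (δ / C) ^ (γ - γ')⁻¹ := by
      rw [hε₀] at hεlt; linarith
    have h2 : (2 * ε) ^ (γ - γ') ≤ ((δ / C) ^ (γ - γ')⁻¹) ^ (γ - γ') :=
      Real.rpow_le_rpow h2ε.le h1.le hexp.le
    rw [Real.rpow_inv_rpow (by positivity) (ne_of_gt hexp)] at h2
    calc C * (2 * ε) ^ (γ - γ') ≤ C * (δ / C) := by
          exact mul_le_mul_of_nonneg_left h2 hCpos.le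
      _ = δ := by field_simp
  -- notation
  set s' : ℝ := max (s - ε) 0 with hs'
  set t' : ℝ := max (t - ε) 0 with ht'
  have hs'mem : s' ∈ Icc (0:ℝ) 1 := ⟨le_max_right _ _, max_le (by linarith) (by norm_num)⟩
  have ht'mem : t' ∈ Icc (0:ℝ) 1 := ⟨le_max_right _ _, max_le (by linarith) (by norm_num)⟩
  have hsmem : s ∈ Icc (0:ℝ) 1 := ⟨hs, by linarith⟩
  have htmem : t ∈ Icc (0:ℝ) 1 := ⟨by linarith, ht⟩
  have hts : 0 < t - s := by linarith
  -- |s' - s| ≤ ε, |t' - t| ≤ ε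
  have habs_s : |s' - s| ≤ ε := by
    rw [abs_le]; constructor
    · have : s - ε ≤ s' := le_max_left _ _; linarith
    · have : s' ≤ s := max_le (by linarith) hs; linarith
  have habs_t : |t' - t| ≤ ε := by
    rw [abs_le]; constructor
    · have : t - ε ≤ t' := le_max_left _ _; linarith
    · have : t' ≤ t := max_le (by linarith) (by linarith); linarith
  -- bound A : |D| ≤ L * (2ε)^γ
  have hA : |f s' t' - f s t| ≤ L * (2 * ε) ^ γ := by
    have h := hH s' hs'mem t' ht'mem s hsmem t htmem
    calc |f s' t' - f s t| ≤ L * (|s' - s| + |t' - t|) ^ γ := h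
      _ ≤ L * (2 * ε) ^ γ := by
          apply mul_le_mul_of_nonneg_left _ hL
          apply Real.rpow_le_rpow (by positivity) (by linarith) hγ0.le
  -- bound B : |D| ≤ 2L * (t-s)^γ
  have ht's' : |t' - s'| ≤ t - s := by
    calc |t' - s'| ≤ |(t - ε) - (s - ε)| := abs_max_sub_max_le_abs _ _ _
      _ = t - s := by rw [show (t - ε) - (s - ε) = t - s by ring, abs_of_pos hts]
  have hB : |f s' t' - f s t| ≤ 2 * L * (t - s) ^ γ := by
    have h1 : |f s' t'| ≤ L * (t - s) ^ γ := by
      have h := hH s' hs'mem t' ht'mem s' hs'mem s' hs'mem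
      rw [hdiag s' hs'mem, sub_zero, sub_self, abs_zero, zero_add] at h
      calc |f s' t'| ≤ L * |t' - s'| ^ γ := h
        _ ≤ L * (t - s) ^ γ := by
            apply mul_le_mul_of_nonneg_left _ hL
            exact Real.rpow_le_rpow (abs_nonneg _) ht's' hγ0.le
    have h2 : |f s t| ≤ L * (t - s) ^ γ := by
      have h := hH s hsmem t htmem s hsmem s hsmem
      rw [hdiag s hsmem, sub_zero, sub_self, abs_zero, zero_add] at h
      calc |f s t| ≤ L * |t - s| ^ γ := h
        _ = L * (t - s) ^ γ := by rw [abs_of_pos hts]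
    calc |f s' t' - f s t| ≤ |f s' t'| + |f s t| := abs_sub _ _
      _ ≤ 2 * L * (t - s) ^ γ := by linarith
  -- split γ = (γ - γ') + γ'
  have hsplit : ∀ x : ℝ, 0 < x → x ^ γ = x ^ (γ - γ') * x ^ γ' := by
    intro x hx
    rw [← Real.rpow_add hx]; ring_nf
  by_cases hcase : t - s ≤ 2 * ε
  · -- use bound B
    calc |f s' t' - f s t| ≤ 2 * L * (t - s) ^ γ := hB
      _ = 2 * L * ((t - s) ^ (γ - γ') * (t - s) ^ γ') := by rw [hsplit _ hts]
      _ ≤ 2 * L * ((2 * ε) ^ (γ - γ') * (t - s) ^ γ') := by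
          apply mul_le_mul_of_nonneg_left _ (by positivity)
          apply mul_le_mul_of_nonneg_right _ (by positivity)
          exact Real.rpow_le_rpow hts.le hcase hexp.le
      _ = 2 * L * (2 * ε) ^ (γ - γ') * (t - s) ^ γ' := by ring
      _ ≤ δ * (t - s) ^ γ' := by
          apply mul_le_mul_of_nonneg_right _ (by positivity)
          have h1 : 2 * L * (2 * ε) ^ (γ - γ') ≤ C * (2 * ε) ^ (γ - γ') := by
            apply mul_le_mul_of_nonneg_right _ (by positivity)
            rw [hC]; linarith
          linarith
  · -- use bound A
    push_neg at hcase
    calc |f s' t' - f s t| ≤ L * (2 * ε) ^ γ := hA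
      _ = L * ((2 * ε) ^ (γ - γ') * (2 * ε) ^ γ') := by rw [hsplit _ h2ε]
      _ ≤ L * ((2 * ε) ^ (γ - γ') * (t - s) ^ γ') := by
          apply mul_le_mul_of_nonneg_left _ hL
          apply mul_le_mul_of_nonneg_left _ (by positivity)
          exact Real.rpow_le_rpow h2ε.le hcase.le hγ'0.le
      _ = L * (2 * ε) ^ (γ - γ') * (t - s) ^ γ' := by ring
      _ ≤ δ * (t - s) ^ γ' := by
          apply mul_le_mul_of_nonneg_right _ (by positivity)
          have h1 : L * (2 * ε) ^ (γ - γ') ≤ C * (2 * ε) ^ (γ - γ') := by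
            apply mul_le_mul_of_nonneg_right _ (by positivity)
            rw [hC]; linarith
          linarith
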